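/- Non-lockability for channels: Let T : M_{d_A}(ℂ) → M_{d_B}(ℂ) ⊗ M_{d_C}(ℂ) be a quantum channel with output on ℂ^{d_B} ⊗ ℂ^{d_C}, and let T' = tr_C ∘ T : M_{d_A}(ℂ) → M_{d_B}(ℂ) be the reduced channel obtained by tracing out the C part of the output. Then E_max(T) ≤ 2·log₂(d_C) + E_max(T'), where in E_max(T) the output of T on a bipartite input state ρ_{A'A} is measured across the bipartition A' : BC, and in E_max(T') across A' : B. -/

import Mathlib

open Matrix
open scoped Kronecker ComplexOrder
attribute [local instance] Classical.propDecidable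

noncomputable section

/-- Real power of a Hermitian matrix via the continuous functional calculus
(with the Moore–Penrose convention `0 ^ r = 0` for `r ≠ 0`). -/
def matRPow {n : Type*} [Fintype n] [DecidableEq n] (A : Matrix n n ℂ) (r : ℝ) :
    Matrix n n ℂ :=
  cfc (fun x : ℝ => x ^ r) A

/-- Base-2 matrix logarithm via the continuous functional calculus. -/
def matLog2 {n : Type*} [Fintype n] [DecidableEq n] (A : Matrix n n ℂ) : Matrix n n ℂ :=
  cfc (fun x : ℝ => Real.logb 2 x) A

/-- A density matrix: positive semidefinite with unit trace. -/
def IsState {n : Type*} [Fintype n] (ρ : Matrix n n ℂ) : Prop :=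
  ρ.PosSemidef ∧ ρ.trace = 1

/-- The sandwiched α-Rényi divergence
`D_α(ρ‖σ) = (α−1)⁻¹ · log₂ tr[(σ^((1−α)/(2α)) ρ σ^((1−α)/(2α)))^α]`. -/
def sandwichedRenyi {n : Type*} [Fintype n] [DecidableEq n] (α : ℝ) (ρ σ : Matrix n n ℂ) : ℝ :=
  (α - 1)⁻¹ *
    Real.logb 2
      (matRPow (matRPow σ ((1 - α) / (2 * α)) * ρ * matRPow σ ((1 - α) / (2 * α))) α).trace.re

/-- The Umegaki relative entropy `D(ρ‖σ) = tr[ρ log₂ ρ] − tr[ρ log₂ σ]`. -/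
def relEnt {n : Type*} [Fintype n] [DecidableEq n] (ρ σ : Matrix n n ℂ) : ℝ :=
  ((ρ * matLog2 ρ).trace - (ρ * matLog2 σ).trace).re

/-- The max-relative entropy `D_max(ρ‖σ) = log₂ inf{c > 0 : c·σ − ρ ⪰ 0}` (with value `⊤`
if no such `c` exists). -/
def Dmax {n : Type*} [Fintype n] (ρ σ : Matrix n n ℂ) : EReal :=
  ⨅ c : {c : ℝ // 0 < c ∧ ((c : ℝ) • σ - ρ).PosSemidef}, ((Real.logb 2 (c : ℝ) : ℝ) : EReal)

/-- Support inclusion for positive semidefinite matrices, expressed as domination: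
`supp ρ ⊆ supp σ` iff `ρ ≤ c·σ` for some `c > 0`. -/
def supportLe {n : Type*} [Fintype n] (ρ σ : Matrix n n ℂ) : Prop :=
  ∃ c : ℝ, 0 < c ∧ ((c : ℝ) • σ - ρ).PosSemidef

/-- Extended-real-valued sandwiched α-Rényi divergence, `⊤` if the support condition fails. -/
def DalphaE {n : Type*} [Fintype n] [DecidableEq n] (α : ℝ) (ρ σ : Matrix n n ℂ) : EReal :=
  if supportLe ρ σ then ((sandwichedRenyi α ρ σ : ℝ) : EReal) else ⊤

/-- Extended-real-valued Umegaki relative entropy, `⊤` if the support condition fails. -/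
def DrelE {n : Type*} [Fintype n] [DecidableEq n] (ρ σ : Matrix n n ℂ) : EReal :=
  if supportLe ρ σ then ((relEnt ρ σ : ℝ) : EReal) else ⊤

/-- Separability of a bipartite state w.r.t. the bipartition given by the product index. -/
def IsSepState {A B : Type*} [Fintype A] [Fintype B]
    (σ : Matrix (A × B) (A × B) ℂ) : Prop :=
  ∃ (k : ℕ) (p : Fin k → ℝ) (τ₁ : Fin k → Matrix A A ℂ) (τ₂ : Fin k → Matrix B B ℂ),
    (∀ i, 0 ≤ p i) ∧ (∑ i, p i = 1) ∧ (∀ i, IsState (τ₁ i)) ∧ (∀ i, IsState (τ₂ i)) ∧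
      σ = ∑ i, (p i : ℂ) • (τ₁ i ⊗ₖ τ₂ i)

/-- The max-relative entropy of entanglement of a bipartite state. -/
def EmaxState {A B : Type*} [Fintype A] [Fintype B]
    (ρ : Matrix (A × B) (A × B) ℂ) : EReal :=
  ⨅ σ : {σ : Matrix (A × B) (A × B) ℂ // IsSepState σ}, Dmax ρ (σ : Matrix (A × B) (A × B) ℂ)

/-- The α-relative entropy of entanglement of a bipartite state. -/
def EalphaState {A B : Type*} [Fintype A] [Fintype B] [DecidableEq A] [DecidableEq B]
    (α : ℝ) (ρ : Matrix (A × B) (A × B) ℂ) : EReal :=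
  ⨅ σ : {σ : Matrix (A × B) (A × B) ℂ // IsSepState σ}, DalphaE α ρ (σ : Matrix (A × B) (A × B) ℂ)

/-- The relative entropy of entanglement of a bipartite state. -/
def ERState {A B : Type*} [Fintype A] [Fintype B] [DecidableEq A] [DecidableEq B]
    (ρ : Matrix (A × B) (A × B) ℂ) : EReal :=
  ⨅ σ : {σ : Matrix (A × B) (A × B) ℂ // IsSepState σ}, DrelE ρ (σ : Matrix (A × B) (A × B) ℂ)

/-- Partial application `id_R ⊗ T` of a map `T` to the second tensor factor. -/
def applyRight {R A B : Type*} (T : Matrix A A ℂ → Matrix B B ℂ)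
    (ρ : Matrix (R × A) (R × A) ℂ) : Matrix (R × B) (R × B) ℂ :=
  Matrix.of fun x y => T (Matrix.of fun a a' => ρ (x.1, a) (y.1, a')) x.2 y.2

/-- Partial application `id_R ⊗ T ⊗ id_S` of a map `T` to the middle tensor factor. -/
def applyMiddle {R A B S : Type*} (T : Matrix A A ℂ → Matrix B B ℂ)
    (ρ : Matrix (R × A × S) (R × A × S) ℂ) : Matrix (R × B × S) (R × B × S) ℂ :=
  Matrix.of fun x y => T (Matrix.of fun a a' => ρ (x.1, a, x.2.2) (y.1, a', y.2.2)) x.2.1 y.2.1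

/-- Regroup a tripartite index `A × (B × C)` as `(A × B) × C`. -/
def assocL {A B C : Type*} (ρ : Matrix (A × B × C) (A × B × C) ℂ) :
    Matrix ((A × B) × C) ((A × B) × C) ℂ :=
  ρ.submatrix (Equiv.prodAssoc A B C) (Equiv.prodAssoc A B C)

/-- The (normalized) Choi matrix `(id ⊗ T)(ω)` of a linear map `T`. -/
def choi {A B : Type*} [Fintype A] [DecidableEq A] (T : Matrix A A ℂ → Matrix B B ℂ) :
    Matrix (A × B) (A × B) ℂ :=
  Matrix.of fun x y => ((Fintype.card A : ℂ))⁻¹ * T (Matrix.single x.1 y.1 1) x.2 y.2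

/-- A quantum channel: linear, trace-preserving and completely positive
(the latter expressed by positive semidefiniteness of the Choi matrix). -/
def IsQChannel {A B : Type*} [Fintype A] [Fintype B] [DecidableEq A]
    (T : Matrix A A ℂ → Matrix B B ℂ) : Prop :=
  IsLinearMap ℂ T ∧ (∀ X, (T X).trace = X.trace) ∧ (choi T).PosSemidef

/-- The max-relative entropy of entanglement of a quantum channel:
`E_max(T) = sup {E_max^{R:B}((id_R ⊗ T)(ρ)) : ρ a state on R ⊗ A, dim R arbitrary}`. -/
def EmaxChan {A B : Type*} [Fintype A] [Fintype B]
    (T : Matrix A A ℂ → Matrix B B ℂ) : EReal :=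
  ⨆ (dR : ℕ) (ρ : {ρ : Matrix (Fin dR × A) (Fin dR × A) ℂ // IsState ρ}),
    EmaxState (applyRight T (ρ : Matrix (Fin dR × A) (Fin dR × A) ℂ))

/-- Partial trace over the second tensor factor. -/
def ptraceSnd {B C : Type*} [Fintype C] (M : Matrix (B × C) (B × C) ℂ) : Matrix B B ℂ :=
  Matrix.of fun b b' => ∑ c : C, M (b, c) (b', c)

/-- Partial trace over the third tensor factor. -/
def ptraceThird {A B C : Type*} [Fintype C] (ρ : Matrix (A × B × C) (A × B × C) ℂ) :
    Matrix (A × B) (A × B) ℂ :=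
  Matrix.of fun x y => ∑ c : C, ρ (x.1, x.2, c) (y.1, y.2, c)

/-- Tensoring with the identity on a third factor: `M ⊗ I_C` on `A ⊗ B ⊗ C`. -/
def tensorId3 {A B C : Type*} [DecidableEq C] [Fintype C] (M : Matrix (A × B) (A × B) ℂ) :
    Matrix (A × B × C) (A × B × C) ℂ :=
  (M ⊗ₖ (1 : Matrix C C ℂ)).submatrix (Equiv.prodAssoc A B C).symm (Equiv.prodAssoc A B C).symm

end
noncomputable section

/-- The trace norm `‖M‖₁ = tr[(M†M)^{1/2}]`. -/
def traceNorm {n : Type*} [Fintype n] [DecidableEq n] (M : Matrix n n ℂ) : ℝ :=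
  (matRPow (Mᴴ * M) (1 / 2 : ℝ)).trace.re

/-- The weighted trace norm `‖X‖_{1,τ} = tr|τ^{1/2} X τ^{1/2}|`. -/
def wnorm1 {n : Type*} [Fintype n] [DecidableEq n] (τ X : Matrix n n ℂ) : ℝ :=
  traceNorm (matRPow τ (1 / 2 : ℝ) * X * matRPow τ (1 / 2 : ℝ))

/-- The spectral (operator) norm of a matrix, as the operator norm of the induced
linear map on Euclidean space. -/
def specNorm {n : Type*} [Fintype n] [DecidableEq n] (M : Matrix n n ℂ) : ℝ :=
  ‖LinearMap.toContinuousLinearMap (Matrix.toEuclideanLin M)‖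

/-- The `d × d` quantum Fourier transform, `(U)_{jk} = e^{2πi jk/d}/√d` for `j,k ∈ {1,…,d}`. -/
def fourierMat (d : ℕ) : Matrix (Fin d) (Fin d) ℂ :=
  Matrix.of fun j k =>
    Complex.exp (2 * (Real.pi : ℂ) * Complex.I * ((((j : ℕ) : ℂ) + 1) * (((k : ℕ) : ℂ) + 1))
        / (d : ℂ)) / ((Real.sqrt d : ℝ) : ℂ)

/-- `U_1 = 1` and `U_2` the quantum Fourier transform. -/
def flowerU (d : ℕ) : Fin 2 → Matrix (Fin d) (Fin d) ℂ :=
  fun l => if l = 0 then 1 else fourierMat d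

/-- The flower state `ρ^f = (1/2d) Σ_{i,k} Σ_{j,l} ⟨k|U_l† U_j|i⟩ |ii⟩⟨kk|_{AB} ⊗ |jj⟩⟨ll|_{A'B'}`,
written on the index `(A × A') × (B × B')` (input system times output system). -/
def flowerState (d : ℕ) :
    Matrix ((Fin d × Fin 2) × (Fin d × Fin 2)) ((Fin d × Fin 2) × (Fin d × Fin 2)) ℂ :=
  Matrix.of fun x y =>
    if x.2.1 = x.1.1 ∧ x.2.2 = x.1.2 ∧ y.2.1 = y.1.1 ∧ y.2.2 = y.1.2 then
      (1 / (2 * (d : ℂ))) * (((flowerU d y.1.2)ᴴ * flowerU d x.1.2) y.1.1 x.1.1)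
    else 0

/-- `p = 1/(√d + 1)`. -/
def pparam (d : ℕ) : ℝ := 1 / (Real.sqrt d + 1)

/-- `Y = (1/d) Σ_{i,j} u_{ij} |ii⟩⟨jj|` on `ℂ^d_A ⊗ ℂ^d_B`, `u` the QFT entries. -/
def Ymat (d : ℕ) : Matrix (Fin d × Fin d) (Fin d × Fin d) ℂ :=
  Matrix.of fun x y =>
    if x.1 = x.2 ∧ y.1 = y.2 then (1 / (d : ℂ)) * fourierMat d x.1 y.1 else 0

/-- The blocks of the separable comparison Choi matrix `C_S`, indexed by the `A'B'` qubit pair. -/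
def CSblock (d : ℕ) (i j : Fin 2 × Fin 2) : Matrix (Fin d × Fin d) (Fin d × Fin d) ℂ :=
  if i = j then
    if i = (0, 1) then ((2 * pparam d : ℝ) : ℂ) • matRPow (Ymat d * (Ymat d)ᴴ) (1 / 2 : ℝ)
    else if i = (1, 0) then ((2 * pparam d : ℝ) : ℂ) • matRPow ((Ymat d)ᴴ * Ymat d) (1 / 2 : ℝ)
    else (((1 - pparam d) / (d ^ 2 : ℝ) : ℝ) : ℂ) • (1 : Matrix (Fin d × Fin d) (Fin d × Fin d) ℂ)
  else 0

/-- The separable comparison Choi matrix `C_S` on `ℂ²_{A'} ⊗ ℂ²_{B'} ⊗ ℂ^d_A ⊗ ℂ^d_B`,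
written on the index `(A' × A) × (B' × B)` grouping the bipartition `(A'A) : (B'B)`. -/
def CSmat (d : ℕ) :
    Matrix ((Fin 2 × Fin d) × (Fin 2 × Fin d)) ((Fin 2 × Fin d) × (Fin 2 × Fin d)) ℂ :=
  Matrix.of fun x y =>
    (1 / (2 * (1 + pparam d) : ℝ) : ℂ) *
      CSblock d (x.1.1, x.2.1) (y.1.1, y.2.1) (x.1.2, x.2.2) (y.1.2, y.2.2)

/-- The blocks of the matrix `M` (the partially transposed state), indexed by the `A'B'`
qubit pair. -/
def Mblock (d : ℕ) (i j : Fin 2 × Fin 2) : Matrix (Fin d × Fin d) (Fin d × Fin d) ℂ :=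
  if i = j then
    if i = (0, 1) then ((pparam d : ℝ) : ℂ) • matRPow (Ymat d * (Ymat d)ᴴ) (1 / 2 : ℝ)
    else if i = (1, 0) then ((pparam d : ℝ) : ℂ) • matRPow ((Ymat d)ᴴ * Ymat d) (1 / 2 : ℝ)
    else (((1 - pparam d) / (d ^ 2 : ℝ) : ℝ) : ℂ) • (1 : Matrix (Fin d × Fin d) (Fin d × Fin d) ℂ)
  else if i = (0, 1) ∧ j = (1, 0) then ((pparam d : ℝ) : ℂ) • Ymat d
  else if i = (1, 0) ∧ j = (0, 1) then ((pparam d : ℝ) : ℂ) • (Ymat d)ᴴ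
  else 0

/-- The matrix `M` on `ℂ²_{A'} ⊗ ℂ²_{B'} ⊗ ℂ^d_A ⊗ ℂ^d_B`, written on the index
`(A' × A) × (B' × B)`. -/
def Mmat (d : ℕ) :
    Matrix ((Fin 2 × Fin d) × (Fin 2 × Fin d)) ((Fin 2 × Fin d) × (Fin 2 × Fin d)) ℂ :=
  Matrix.of fun x y =>
    (1 / 2 : ℂ) * Mblock d (x.1.1, x.2.1) (y.1.1, y.2.1) (x.1.2, x.2.2) (y.1.2, y.2.2)

end

/-!
Fix an input state `ρ` on `R ⊗ A` and put `ω = (id ⊗ T)(ρ)` on `R ⊗ B ⊗ C`. If `σ` is separable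
across `R : B` and `tr_C ω ≤ c σ`, then `σ ⊗ 1_C / d_C` is separable across `R : BC`, and the
pinching inequality `ω ≤ d_C (tr_C ω) ⊗ 1_C` yields `ω ≤ c d_C² (σ ⊗ 1_C / d_C)`. Hence
`E_max(ω) ≤ 2 log₂ d_C + E_max(tr_C ω)`, and taking the supremum over `ρ` gives the claim.

Pinching comes from the operator Cauchy–Schwarz inequality
`(∑ₖ Xₖ)ᴴ M (∑ₖ Xₖ) ≤ n ∑ₖ Xₖᴴ M Xₖ` applied to `1 = ∑ₖ 1 ⊗ |k⟩⟨k|`; enlarging the resulting sum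
over `k` to the sum over `(c, k)` of `(1 ⊗ |c⟩⟨k|)ᴴ M (1 ⊗ |c⟩⟨k|)` gives exactly `(tr_C M) ⊗ 1_C`.
-/

open scoped MatrixOrder

theorem EReal.le_coe_add_iInf {ι : Sort*} {K : ℝ} {f : ι → EReal} {x : EReal}
    (h : ∀ i, x ≤ K + f i) : x ≤ K + ⨅ i, f i := by
  have hK (y : EReal) : x - K ≤ y ↔ x ≤ y + K :=
    EReal.sub_le_iff_le_add (Or.inl (EReal.coe_ne_bot K)) (Or.inl (EReal.coe_ne_top K))
  rw [add_comm, ← hK]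
  exact le_iInf fun i => (hK _).mpr ((h i).trans_eq (add_comm _ _))

namespace Matrix

section CauchySchwarz

variable {𝕜 : Type*} [RCLike 𝕜] {n m ι : Type*} [Fintype n] [Fintype m] [Fintype ι]

theorem conjTranspose_sum_mul_mul_sum_le {A : Matrix n n 𝕜} (hA : A.PosSemidef)
    (X : ι → Matrix n m 𝕜) :
    (∑ i, X i)ᴴ * A * ∑ i, X i ≤ (Fintype.card ι : ℝ) • ∑ i, (X i)ᴴ * A * X i := by
  set S := ∑ i, ∑ j, (X i)ᴴ * A * X j
  set D := ∑ i, (X i)ᴴ * A * X i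
  have hS : (∑ i, X i)ᴴ * A * ∑ i, X i = S := by
    simp only [S, conjTranspose_sum, Matrix.sum_mul, Matrix.mul_sum]
    exact Finset.sum_comm
  have hvar : ∑ i, ∑ j, (X i - X j)ᴴ * A * (X i - X j)
      = (2 * Fintype.card ι : ℝ) • D - (2 : ℝ) • S := by
    have hS' : ∑ i, ∑ j, (X j)ᴴ * A * X i = S := Finset.sum_comm
    simp only [conjTranspose_sub, Matrix.sub_mul, Matrix.mul_sub, Finset.sum_sub_distrib, hS']
    simp only [Finset.sum_const, Finset.card_univ, D, S, ← Finset.smul_sum]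
    module
  have hpos : ((1 / 2 : ℝ) • ∑ i, ∑ j, (X i - X j)ᴴ * A * (X i - X j)).PosSemidef :=
    (posSemidef_sum _ fun i _ => posSemidef_sum _ fun j _ =>
      hA.conjTranspose_mul_mul_same _).smul (by norm_num)
  rw [le_iff, hS]
  convert hpos using 1
  rw [hvar]
  module

end CauchySchwarz

theorem kronecker_sum_single_one {α l m C : Type*} [CommSemiring α] [Fintype C] [DecidableEq C]
    (A : Matrix l m α) : ∑ k : C, A ⊗ₖ single k k (1 : α) = A ⊗ₖ 1 := by
  change ∑ k, kroneckerBilinear (R := α) A (single k k 1) = _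
  rw [← map_sum, sum_single_one]
  rfl

theorem sum_kronecker {α ι l m n p : Type*} [CommSemiring α] [Fintype ι] (A : ι → Matrix l m α)
    (B : Matrix n p α) : (∑ i, A i) ⊗ₖ B = ∑ i, A i ⊗ₖ B := by
  change kroneckerBilinear (R := α) (∑ i, A i) B = ∑ i, kroneckerBilinear (R := α) (A i) B
  rw [map_sum, LinearMap.sum_apply]

theorem one_kronecker_single_conj {𝕜 X C : Type*} [RCLike 𝕜] [Fintype X] [Fintype C]
    [DecidableEq X] [DecidableEq C] (M : Matrix (X × C) (X × C) 𝕜) (c k : C) :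
    ((1 : Matrix X X 𝕜) ⊗ₖ single c k 1)ᴴ * M * ((1 : Matrix X X 𝕜) ⊗ₖ single c k 1)
      = M.submatrix (·, c) (·, c) ⊗ₖ single k k 1 := by
  ext ⟨x, i⟩ ⟨y, j⟩
  simp only [mul_apply, conjTranspose_apply, kroneckerMap_apply, one_apply, single_apply,
    ite_and, mul_ite, mul_one, mul_zero, RCLike.star_def, apply_ite (starRingEnd 𝕜), map_one,
    map_zero, ite_mul, one_mul, zero_mul, Fintype.sum_prod_type, Finset.sum_ite_eq,
    Finset.mem_univ, ↓reduceIte, Finset.sum_ite_irrel, Finset.sum_ite_eq', Finset.sum_const_zero,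
    submatrix_apply]
  split_ifs <;> rfl

theorem ptraceSnd_eq_sum_submatrix {X C : Type*} [Fintype C] (M : Matrix (X × C) (X × C) ℂ) :
    ptraceSnd M = ∑ c, M.submatrix (·, c) (·, c) := by
  ext x y
  simp [ptraceSnd, sum_apply]

theorem PosSemidef.le_card_smul_ptraceSnd_kronecker_one {X C : Type*} [Fintype X] [Fintype C]
    [DecidableEq X] [DecidableEq C] {M : Matrix (X × C) (X × C) ℂ}
    (hM : M.PosSemidef) : M ≤ (Fintype.card C : ℝ) • (ptraceSnd M ⊗ₖ (1 : Matrix C C ℂ)) := by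
  set P : C → C → Matrix (X × C) (X × C) ℂ := fun c k => 1 ⊗ₖ single c k 1
  calc M = (∑ k, P k k)ᴴ * M * ∑ k, P k k := by simp [P, kronecker_sum_single_one]
    _ ≤ (Fintype.card C : ℝ) • ∑ k, (P k k)ᴴ * M * P k k := conjTranspose_sum_mul_mul_sum_le hM _
    _ ≤ (Fintype.card C : ℝ) • ∑ k, ∑ c, (P c k)ᴴ * M * P c k := by
        gcongr with k
        exact Finset.single_le_sum (f := fun c => (P c k)ᴴ * M * P c k)
          (fun c _ => (hM.conjTranspose_mul_mul_same _).nonneg) (Finset.mem_univ k)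
    _ = (Fintype.card C : ℝ) • (ptraceSnd M ⊗ₖ (1 : Matrix C C ℂ)) := by
        simp only [P, one_kronecker_single_conj, ptraceSnd_eq_sum_submatrix]
        rw [Finset.sum_comm, sum_kronecker]
        simp only [kronecker_sum_single_one]

end Matrix

open Matrix

section TensorId

variable {R B C : Type*} [Fintype C] [DecidableEq C]

theorem tensorId3_sub (M N : Matrix (R × B) (R × B) ℂ) :
    tensorId3 (C := C) (M - N) = tensorId3 M - tensorId3 N := by
  ext x y
  simp [tensorId3, sub_mul]

theorem tensorId3_smul (r : ℝ) (M : Matrix (R × B) (R × B) ℂ) :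
    tensorId3 (C := C) (r • M) = r • tensorId3 M := by
  ext x y
  simp [tensorId3, mul_assoc]

theorem tensorId3_mono [Fintype R] [Fintype B] {M N : Matrix (R × B) (R × B) ℂ} (h : M ≤ N) :
    tensorId3 (C := C) M ≤ tensorId3 N := by
  rw [le_iff, ← tensorId3_sub]
  exact (h.kronecker PosSemidef.one).submatrix _

theorem Matrix.PosSemidef.le_card_smul_tensorId3_ptraceThird [Fintype R] [Fintype B]
    {M : Matrix (R × B × C) (R × B × C) ℂ} (hM : M.PosSemidef) :
    M ≤ (Fintype.card C : ℝ) • tensorId3 (ptraceThird M) := by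
  have h := (hM.submatrix (Equiv.prodAssoc R B C)).le_card_smul_ptraceSnd_kronecker_one
  rw [le_iff] at h ⊢
  simpa [tensorId3, ptraceThird, ptraceSnd, submatrix_sub, submatrix_smul] using
    h.submatrix (Equiv.prodAssoc R B C).symm

end TensorId

theorem IsState.nonempty {n : Type*} [Fintype n] {ρ : Matrix n n ℂ} (hρ : IsState ρ) :
    Nonempty n := by
  by_contra h
  have : IsEmpty n := not_nonempty_iff.mp h
  simpa [Matrix.trace] using hρ.2

theorem IsState.kronecker {m n : Type*} [Fintype m] [Fintype n] {ρ : Matrix m m ℂ}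
    {σ : Matrix n n ℂ} (hρ : IsState ρ) (hσ : IsState σ) : IsState (ρ ⊗ₖ σ) :=
  ⟨hρ.1.kronecker hσ.1, by rw [trace_kronecker, hρ.2, hσ.2, one_mul]⟩

theorem isState_inv_card_smul_one {n : Type*} [Fintype n] [DecidableEq n] [Nonempty n] :
    IsState ((Fintype.card n : ℝ)⁻¹ • (1 : Matrix n n ℂ)) := by
  refine ⟨PosSemidef.one.smul (by positivity), ?_⟩
  rw [trace_smul, trace_one, Complex.real_smul]
  push_cast
  exact inv_mul_cancel₀ (Nat.cast_ne_zero.mpr Fintype.card_ne_zero)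

theorem IsSepState.inv_card_smul_tensorId3 {R B C : Type*} [Fintype R] [Fintype B] [Fintype C]
    [DecidableEq C] [Nonempty C] {σ : Matrix (R × B) (R × B) ℂ} (hσ : IsSepState σ) :
    IsSepState ((Fintype.card C : ℝ)⁻¹ • tensorId3 (C := C) σ) := by
  obtain ⟨k, p, τ₁, τ₂, hp, hp1, hτ₁, hτ₂, rfl⟩ := hσ
  have hμ : IsState ((Fintype.card C : ℝ)⁻¹ • (1 : Matrix C C ℂ)) := isState_inv_card_smul_one
  refine ⟨k, p, τ₁, fun i => τ₂ i ⊗ₖ ((Fintype.card C : ℝ)⁻¹ • (1 : Matrix C C ℂ)), hp, hp1, hτ₁,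
    fun i => (hτ₂ i).kronecker hμ, ?_⟩
  ext x y
  simp only [tensorId3, Matrix.smul_apply, submatrix_apply, kroneckerMap_apply, Matrix.sum_apply,
    Finset.mul_sum, Finset.sum_mul, smul_eq_mul, Complex.real_smul]
  refine Finset.sum_congr rfl fun i _ => ?_
  simp only [Complex.ofReal_inv, Complex.ofReal_natCast, Equiv.prodAssoc_symm_apply, one_apply,
    mul_ite, mul_one, mul_zero]
  split_ifs <;> ring

theorem dmax_le_logb {n : Type*} [Fintype n] {ρ σ : Matrix n n ℂ} {c : ℝ} (hc : 0 < c)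
    (h : ρ ≤ c • σ) : Dmax ρ σ ≤ Real.logb 2 c :=
  iInf_le_of_le ⟨c, hc, h⟩ le_rfl

theorem emaxState_le_two_logb_card_add_emaxState_ptraceThird {R B C : Type*} [Fintype R]
    [Fintype B] [Fintype C] [DecidableEq C] [Nonempty C] {ω : Matrix (R × B × C) (R × B × C) ℂ}
    (hω : ω.PosSemidef) :
    EmaxState ω ≤ ((2 * Real.logb 2 (Fintype.card C) : ℝ) : EReal) + EmaxState (ptraceThird ω) := by
  refine EReal.le_coe_add_iInf fun σ => EReal.le_coe_add_iInf fun ⟨c, hc, hcσ⟩ => ?_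
  set d := (Fintype.card C : ℝ)
  have hd : 0 < d := Nat.cast_pos.mpr Fintype.card_pos
  have hfeas : ω ≤ (c * d ^ 2) • (d⁻¹ • tensorId3 (C := C) σ.1) :=
    calc ω ≤ d • tensorId3 (ptraceThird ω) := hω.le_card_smul_tensorId3_ptraceThird
      _ ≤ d • tensorId3 (c • σ.1) := smul_le_smul_of_nonneg_left (tensorId3_mono hcσ) hd.le
      _ = (c * d ^ 2) • (d⁻¹ • tensorId3 σ.1) := by
        rw [tensorId3_smul, smul_smul, smul_smul]
        congr 1
        field_simp
  calc EmaxState ω ≤ Dmax ω (d⁻¹ • tensorId3 (C := C) σ.1) :=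
        iInf_le_of_le ⟨_, σ.2.inv_card_smul_tensorId3⟩ le_rfl
    _ ≤ Real.logb 2 (c * d ^ 2) := dmax_le_logb (by positivity) hfeas
    _ = ((2 * Real.logb 2 d : ℝ) : EReal) + Real.logb 2 c := by
        rw [Real.logb_mul hc.ne' (by positivity), Real.logb_pow, add_comm, ← EReal.coe_add]
        push_cast
        rfl

section Channels

variable {R A B : Type*} [Fintype A] [DecidableEq A]

theorem nonempty_of_trace_preserving [Fintype B] [Nonempty A] {T : Matrix A A ℂ → Matrix B B ℂ}
    (hT : ∀ X, (T X).trace = X.trace) : Nonempty B := by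
  by_contra h
  have : IsEmpty B := not_nonempty_iff.mp h
  have h1 := hT 1
  rw [trace_one, Matrix.trace, Finset.univ_eq_empty, Finset.sum_empty] at h1
  exact Fintype.card_ne_zero (Nat.cast_eq_zero.mp h1.symm)

theorem IsLinearMap.apply_eq_sum_single {T : Matrix A A ℂ → Matrix B B ℂ} (hT : IsLinearMap ℂ T)
    (X : Matrix A A ℂ) : T X = ∑ a, ∑ a', X a a' • T (single a a' 1) := by
  let L := IsLinearMap.mk' T hT
  conv_lhs => rw [matrix_eq_sum_single X]
  change L _ = ∑ a, ∑ a', X a a' • L _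
  simp only [map_sum]
  refine Finset.sum_congr rfl fun a _ => Finset.sum_congr rfl fun a' _ => ?_
  rw [← L.map_smul, smul_single, smul_eq_mul, mul_one]

theorem single_apply_eq_card_mul_choi (T : Matrix A A ℂ → Matrix B B ℂ) (a a' : A) (b b' : B) :
    T (single a a' 1) b b' = Fintype.card A * choi T (a, b) (a', b') := by
  have : Nonempty A := ⟨a⟩
  have : (Fintype.card A : ℂ) ≠ 0 := Nat.cast_ne_zero.mpr Fintype.card_ne_zero
  rw [choi, of_apply, mul_inv_cancel_left₀ this]

/-- `1_R ⊗ |Ω⟩ ⊗ 1_B`, with `|Ω⟩ = ∑ₐ |a a⟩` the unnormalised maximally entangled vector on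
`A ⊗ A`: contracting `ρ ⊗ C_T` with it along both copies of `A` gives `(id ⊗ T)(ρ)`. -/
noncomputable def omegaLink (R A B : Type*) : Matrix ((R × A) × (A × B)) (R × B) ℂ :=
  of fun u x => if u.1.1 = x.1 ∧ u.1.2 = u.2.1 ∧ u.2.2 = x.2 then 1 else 0

theorem conjTranspose_omegaLink_mul_mul_apply [Fintype R] [Fintype B]
    (K : Matrix ((R × A) × (A × B)) ((R × A) × (A × B)) ℂ) (x y : R × B) :
    ((omegaLink R A B)ᴴ * K * omegaLink R A B) x y
      = ∑ a, ∑ a', K ((x.1, a), (a, x.2)) ((y.1, a'), (a', y.2)) := by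
  simp only [omegaLink, ite_and, mul_apply, conjTranspose_apply, of_apply, RCLike.star_def,
    apply_ite (starRingEnd ℂ), map_one, map_zero, ite_mul, one_mul, zero_mul,
    Fintype.sum_prod_type, Finset.sum_ite_irrel, Finset.sum_ite_eq', Finset.mem_univ, ↓reduceIte,
    Finset.sum_const_zero, Finset.sum_ite_eq, mul_ite, mul_one, mul_zero]
  exact Finset.sum_comm

theorem applyRight_eq_card_smul_conj_kronecker_choi [Fintype R] [Fintype B]
    {T : Matrix A A ℂ → Matrix B B ℂ} (hT : IsLinearMap ℂ T) (ρ : Matrix (R × A) (R × A) ℂ) :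
    applyRight T ρ
      = (Fintype.card A : ℝ) • ((omegaLink R A B)ᴴ * (ρ ⊗ₖ choi T) * omegaLink R A B) := by
  ext x y
  rw [Matrix.smul_apply, conjTranspose_omegaLink_mul_mul_apply, applyRight, of_apply,
    hT.apply_eq_sum_single, Complex.real_smul, Finset.mul_sum]
  simp only [Matrix.sum_apply, Matrix.smul_apply, of_apply, smul_eq_mul,
    single_apply_eq_card_mul_choi, kronecker_apply, Finset.mul_sum]
  refine Finset.sum_congr rfl fun a _ => Finset.sum_congr rfl fun a' _ => ?_
  push_cast
  ring

theorem posSemidef_applyRight [Fintype R] [Fintype B] {T : Matrix A A ℂ → Matrix B B ℂ}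
    (hT : IsLinearMap ℂ T) (hC : (choi T).PosSemidef) {ρ : Matrix (R × A) (R × A) ℂ}
    (hρ : ρ.PosSemidef) :
    (applyRight T ρ).PosSemidef := by
  rw [applyRight_eq_card_smul_conj_kronecker_choi hT]
  exact ((hρ.kronecker hC).conjTranspose_mul_mul_same _).smul (Nat.cast_nonneg _)

end Channels

theorem ptraceThird_applyRight {R A B C : Type*} [Fintype C]
    (T : Matrix A A ℂ → Matrix (B × C) (B × C) ℂ) (ρ : Matrix (R × A) (R × A) ℂ) :
    ptraceThird (applyRight T ρ) = applyRight (fun X => ptraceSnd (T X)) ρ :=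
  rfl

/-- **Non-lockability for channels**: tracing out a `d_C`-dimensional part of the output,
`E_max(T) ≤ 2·log₂(d_C) + E_max(tr_C ∘ T)`. -/
theorem emax_channel_non_lockability
    {dA dB dC : ℕ}
    (T : Matrix (Fin dA) (Fin dA) ℂ → Matrix (Fin dB × Fin dC) (Fin dB × Fin dC) ℂ)
    (hT : IsQChannel T) :
    EmaxChan T ≤ ((2 * Real.logb 2 dC : ℝ) : EReal) +
      EmaxChan (fun X => ptraceSnd (T X)) := by
  refine iSup₂_le fun dR ρ => ?_
  have : Nonempty (Fin dA) := ρ.2.nonempty.map Prod.snd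
  have : Nonempty (Fin dC) := (nonempty_of_trace_preserving hT.2.1).map Prod.snd
  have hω := posSemidef_applyRight hT.1 hT.2.2 ρ.2.1
  calc EmaxState (applyRight T ρ.1)
      ≤ ((2 * Real.logb 2 dC : ℝ) : EReal) + EmaxState (ptraceThird (applyRight T ρ.1)) := by
        simpa using emaxState_le_two_logb_card_add_emaxState_ptraceThird hω
    _ ≤ _ := by
        rw [ptraceThird_applyRight]
        gcongr
        exact le_iSup₂_of_le dR ρ le_rfl
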